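/- arXiv:math/0608376 — 2 statements merged into one kernel-verified Lean document; each statement's English description precedes it below -/
import Mathlib

section
/- Every continuous real-valued function on a product [0,1]^κ of unit intervals depends on only countably many coordinates: there is a countable S ⊆ κ such that f(x) = f(y) whenever x and y agree on S. -/
open Filter Set Uniformity

/-! A uniform continuity witness on a product only ever constrains finitely many coordinates, so
for each entourage `V n` of a countable basis of the target, `f x` and `f y` are `V n`-close as soon
as `x` and `y` agree on a finite set `F n`. Agreeing on the countable set `⋃ n, F n` then makes
`f x` and `f y` inseparable, hence equal. A continuous function on the compact space `[0,1]^κ` is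
uniformly continuous. -/

theorem Pi.exists_finite_forall_eq_imp_mem_of_mem_uniformity {ι : Type*} {α : ι → Type*}
    [∀ i, UniformSpace (α i)] {U : Set ((∀ i, α i) × (∀ i, α i))} (hU : U ∈ 𝓤 (∀ i, α i)) :
    ∃ F : Set ι, F.Finite ∧ ∀ x y : ∀ i, α i, (∀ i ∈ F, x i = y i) → (x, y) ∈ U := by
  rw [Pi.uniformity, mem_iInf] at hU
  obtain ⟨I, hI, V, hV, rfl⟩ := hU
  refine ⟨I, hI, fun x y hxy => mem_iInter.2 fun i => ?_⟩
  obtain ⟨W, hW, hWV⟩ := mem_comap.1 (hV i)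
  refine hWV ?_
  simpa only [mem_preimage, hxy i i.2] using refl_mem_uniformity hW

theorem UniformContinuous.exists_countable_forall_eq_imp_eq {ι : Type*} {α : ι → Type*}
    [∀ i, UniformSpace (α i)] {β : Type*} [UniformSpace β] [(𝓤 β).IsCountablyGenerated]
    [T0Space β] {f : (∀ i, α i) → β} (hf : UniformContinuous f) :
    ∃ S : Set ι, S.Countable ∧ ∀ x y : ∀ i, α i, (∀ i ∈ S, x i = y i) → f x = f y := by
  obtain ⟨V, hV⟩ := (𝓤 β).exists_antitone_basis
  choose F hF hFV using fun n =>
    Pi.exists_finite_forall_eq_imp_mem_of_mem_uniformity (hf (hV.mem n))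
  refine ⟨⋃ n, F n, countable_iUnion fun n => (hF n).countable, fun x y hxy => ?_⟩
  exact eq_of_uniformity_basis hV.toHasBasis fun {n} _ =>
    hFV n x y fun i hi => hxy i (mem_iUnion_of_mem n hi)

/-- Every continuous real-valued function on `[0,1]^κ` depends on only countably
many coordinates. -/
theorem stmt_6 {κ : Type*} (f : C(κ → Set.Icc (0 : ℝ) 1, ℝ)) :
    ∃ S : Set κ, S.Countable ∧
      ∀ x y : κ → Set.Icc (0 : ℝ) 1, (∀ s ∈ S, x s = y s) → f x = f y :=
  (CompactSpace.uniformContinuous_of_continuous f.continuous).exists_countable_forall_eq_imp_eq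
end

section
/- Dushnik–Miller partition relation: ω₁ → (ω₁, ω)². For every coloring c of the two-element subsets of ω₁ with colors {0, 1}, either there is an uncountable set B ⊆ ω₁ all of whose pairs have color 0, or there is an infinite set A ⊆ ω₁ all of whose pairs have color 1. -/
open Set Cardinal

universe u

private abbrev II : Type (u + 1) := {o : Ordinal.{u} // o < (Cardinal.aleph 1).ord}

private lemma II_univ_uncountable : ¬ (Set.univ : Set II.{u}).Countable := by
  rw [Set.countable_univ_iff]
  intro h
  have h1 : #II.{u} ≤ Cardinal.aleph0 := Cardinal.mk_le_aleph0
  have h2 : #II.{u} = Cardinal.lift.{u + 1, u} (Cardinal.aleph.{u} 1) := by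
    have := Ordinal.mk_Iio_ordinal (Cardinal.aleph 1).ord
    rw [Cardinal.card_ord] at this
    exact this
  rw [h2] at h1
  rw [← Cardinal.lift_aleph0.{u + 1, u}] at h1
  exact absurd (Cardinal.lift_le.mp h1) (not_le.mpr Cardinal.aleph0_lt_aleph_one)

/-- Dushnik–Miller: `ω₁ → (ω₁, ω)²`.  For any 2-coloring of the pairs of ordinals
below `ω₁`, either there is an uncountable set all of whose pairs get color `false`,
or an infinite set all of whose pairs get color `true`. -/
theorem stmt_15
    (c : {o : Ordinal // o < (Cardinal.aleph 1).ord} →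
         {o : Ordinal // o < (Cardinal.aleph 1).ord} → Bool) :
    (∃ B : Set {o : Ordinal // o < (Cardinal.aleph 1).ord},
        ¬ B.Countable ∧ ∀ α ∈ B, ∀ β ∈ B, α < β → c α β = false) ∨
      (∃ A : Set {o : Ordinal // o < (Cardinal.aleph 1).ord},
        A.Infinite ∧ ∀ α ∈ A, ∀ β ∈ A, α < β → c α β = true) := by
  classical
  -- symmetrized coloring
  set d : II → II → Bool := fun a b => if a < b then c a b else c b a with hd
  have dsymm : ∀ a b : II, d a b = d b a := by
    intro a b
    rcases lt_trichotomy a b with h | h | h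
    · simp [hd, h, not_lt.mpr h.le]
    · simp [h]
    · simp [hd, h, not_lt.mpr h.le]
  have dlt : ∀ a b : II, a < b → d a b = c a b := by
    intro a b h; simp [hd, h]
  -- neighborhood
  set N : II → Set II → Set II := fun α X => {β ∈ X | β ≠ α ∧ d α β = true} with hN
  by_cases H : ∀ X : Set II, ¬ X.Countable → ∃ α ∈ X, ¬ (N α X).Countable
  · -- build infinite true-homogeneous set
    right
    have step : ∀ X : {X : Set II // ¬ X.Countable},
        ∃ p : II × {X : Set II // ¬ X.Countable},
          p.1 ∈ X.1 ∧ (p.2).1 = N p.1 X.1 := by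
      rintro ⟨X, hX⟩
      obtain ⟨α, hα, hαN⟩ := H X hX
      exact ⟨⟨α, ⟨N α X, hαN⟩⟩, hα, rfl⟩
    let F : {X : Set II // ¬ X.Countable} → II × {X : Set II // ¬ X.Countable} :=
      fun X => (step X).choose
    have hF1 : ∀ X, (F X).1 ∈ X.1 := fun X => (step X).choose_spec.1
    have hF2 : ∀ X, ((F X).2).1 = N (F X).1 X.1 := fun X => (step X).choose_spec.2
    let Xs : ℕ → {X : Set II // ¬ X.Countable} := fun n =>
      Nat.rec ⟨Set.univ, II_univ_uncountable⟩ (fun _ X => (F X).2) n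
    let a : ℕ → II := fun n => (F (Xs n)).1
    have hXdef : ∀ n, Xs (n+1) = (F (Xs n)).2 := fun _ => rfl
    have hXsucc : ∀ n, (Xs (n+1)).1 = N (a n) (Xs n).1 := by
      intro n
      rw [hXdef n]
      exact hF2 (Xs n)
    have hmem : ∀ n, a n ∈ (Xs n).1 := fun n => hF1 (Xs n)
    have hsub : ∀ n, (Xs (n+1)).1 ⊆ (Xs n).1 := by
      intro n β hβ
      rw [hXsucc n] at hβ
      exact hβ.1
    have hmono : ∀ m n, m ≤ n → (Xs n).1 ⊆ (Xs m).1 := by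
      intro m n h
      induction n with
      | zero => cases Nat.le_zero.mp h; exact le_refl _
      | succ k ih =>
        rcases Nat.lt_or_ge m (k+1) with h' | h'
        · exact (hsub k).trans (ih (Nat.lt_succ_iff.mp h'))
        · have : m = k+1 := le_antisymm h h'
          subst this; exact le_refl _
    have key : ∀ m n, m < n → a n ≠ a m ∧ d (a m) (a n) = true := by
      intro m n h
      have : a n ∈ (Xs (m+1)).1 := hmono (m+1) n h (hmem n)
      rw [hXsucc m] at this
      exact ⟨this.2.1, this.2.2⟩
    have ainj : Function.Injective a := by
      intro m n h
      by_contra hne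
      rcases Nat.lt_or_ge m n with h' | h'
      · exact (key m n h').1 h.symm
      · exact (key n m (lt_of_le_of_ne h' (Ne.symm hne))).1 h
    refine ⟨Set.range a, Set.infinite_range_of_injective ainj, ?_⟩
    rintro α ⟨m, rfl⟩ β ⟨n, rfl⟩ hlt
    have hmn : m ≠ n := by rintro rfl; exact lt_irrefl _ hlt
    have hdt : d (a m) (a n) = true := by
      rcases Nat.lt_or_ge m n with h' | h'
      · exact (key m n h').2
      · rw [dsymm]; exact (key n m (lt_of_le_of_ne h' (Ne.symm hmn))).2
    rw [← dlt _ _ hlt]; exact hdt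
  · -- build uncountable false-homogeneous set
    left
    push_neg at H
    obtain ⟨X, hX, hsmall⟩ := H
    -- Zorn on 0-homogeneous subsets of X
    set S : Set (Set II) := {B | B ⊆ X ∧ ∀ a ∈ B, ∀ b ∈ B, a ≠ b → d a b = false} with hS
    obtain ⟨B, hBmax⟩ : ∃ B, Maximal (· ∈ S) B := by
      apply zorn_subset
      intro ch hch hchain
      refine ⟨⋃₀ ch, ⟨?_, ?_⟩, fun s hs => Set.subset_sUnion_of_mem hs⟩
      · intro x hx
        obtain ⟨s, hs, hxs⟩ := hx
        exact (hch hs).1 hxs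
      · rintro x ⟨s, hs, hxs⟩ y ⟨t, ht, hyt⟩ hxy
        rcases hchain.total hs ht with h | h
        · exact (hch ht).2 x (h hxs) y hyt hxy
        · exact (hch hs).2 x hxs y (h hyt) hxy
    have hBX : B ⊆ X := hBmax.1.1
    have hBhom : ∀ a ∈ B, ∀ b ∈ B, a ≠ b → d a b = false := hBmax.1.2
    refine ⟨B, ?_, ?_⟩
    · intro hBc
      have hTc : (⋃ α ∈ B, (N α X ∪ {α})).Countable :=
        hBc.biUnion (fun α hα => (hsmall α (hBX hα)).union (Set.countable_singleton α))
      have : ¬ (X ⊆ ⋃ α ∈ B, (N α X ∪ {α})) := by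
        intro hsub
        exact hX (hTc.mono hsub)
      obtain ⟨γ, hγX, hγT⟩ := Set.not_subset.mp this
      have hγB : γ ∉ B := by
        intro h
        exact hγT (Set.mem_biUnion h (Set.mem_union_right _ rfl))
      have hnew : insert γ B ∈ S := by
        constructor
        · intro x hx
          rcases hx with rfl | hx
          · exact hγX
          · exact hBX hx
        · intro x hx y hy hxy
          rcases hx with hxg | hx <;> rcases hy with hyg | hy
          · rw [hxg, hyg] at hxy; exact absurd rfl hxy
          · -- x = γ, y ∈ B : show d γ y = false
            rw [hxg] at hxy ⊢
            rw [dsymm]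
            by_contra hne
            have : γ ∈ N y X := ⟨hγX, hxy, Bool.of_not_eq_false hne⟩
            exact hγT (Set.mem_biUnion hy (Set.mem_union_left _ this))
          · rw [hyg] at hxy ⊢
            by_contra hne
            have : γ ∈ N x X := ⟨hγX, hxy.symm, Bool.of_not_eq_false hne⟩
            exact hγT (Set.mem_biUnion hx (Set.mem_union_left _ this))
          · exact hBhom x hx y hy hxy
      have := hBmax.2 hnew (Set.subset_insert γ B)
      exact hγB (this (Set.mem_insert γ B))
    · intro α hα β hβ hlt
      rw [← dlt _ _ hlt]
      exact hBhom α hα β hβ (ne_of_lt hlt)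
end
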